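/- If pi is a restriction of an André permutation of the second kind coming from a strictly binary increasing tree, and t is the left-oriented binary increasing tree with phi(t) = pi, then the set of right-to-left minima of pi equals the set of labels on the max-path of t. -/

import Mathlib

namespace Andre

/-- Plane binary trees with natural-number labels; `nil` is the empty tree. -/
inductive PTree where
  | nil : PTree
  | node (lab : ℕ) (l r : PTree) : PTree
deriving DecidableEq

namespace PTree

def size : PTree → ℕ
  | nil => 0
  | node _ l r => l.size + r.size + 1

def labels : PTree → Finset ℕ
  | nil => ∅
  | node a l r => insert a (l.labels ∪ r.labels)

def rootLabel : PTree → ℕ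
  | nil => 0
  | node a _ _ => a

def Increasing : PTree → Prop
  | nil => True
  | node a l r => (∀ b ∈ l.labels, a < b) ∧ (∀ b ∈ r.labels, a < b) ∧ l.Increasing ∧ r.Increasing

/-- `t` is a binary increasing tree on the label set {1,…,n}. -/
def IsBIT (n : ℕ) (t : PTree) : Prop :=
  t.Increasing ∧ t.size = n ∧ t.labels = Finset.Icc 1 n

/-- standard drawing (a1),(a2): an only child is on the right, and of two
children the one with the smaller label is on the left. -/
def StdOriented : PTree → Prop
  | nil => True
  | node _ l r => (r = nil → l = nil) ∧ (l ≠ nil → r ≠ nil → l.rootLabel < r.rootLabel)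
      ∧ l.StdOriented ∧ r.StdOriented

/-- left-oriented drawing: an only child is on the left, and of two
children the one with the smaller label is on the left. -/
def LeftOriented : PTree → Prop
  | nil => True
  | node _ l r => (l = nil → r = nil) ∧ (l ≠ nil → r ≠ nil → l.rootLabel < r.rootLabel)
      ∧ l.LeftOriented ∧ r.LeftOriented

/-- strictly binary: no node has outdegree one. -/
def Strict : PTree → Prop
  | nil => True
  | node _ l r => (l = nil ↔ r = nil) ∧ l.Strict ∧ r.Strict

/-- the collapsing procedure φ: repeatedly collapsing leaves into their parents
produces exactly the in-order reading word of the plane-drawn tree. -/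
def phi : PTree → List ℕ
  | nil => []
  | node a l r => phi l ++ a :: phi r

/-- `Sim t t'` means `t` and `t'` are two plane drawings of the same
(unordered) labelled tree. -/
inductive Sim : PTree → PTree → Prop
  | nil : Sim nil nil
  | node {a : ℕ} {l r l' r' : PTree} : Sim l l' → Sim r r' → Sim (node a l r) (node a l' r')
  | swap {a : ℕ} {l r l' r' : PTree} : Sim l r' → Sim r l' → Sim (node a l r) (node a l' r')

/-- number of nodes of outdegree 0. -/
def leaves : PTree → ℕ
  | nil => 0
  | node _ nil nil => 1
  | node _ l r => l.leaves + r.leaves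

/-- number of nodes of outdegree 1. -/
def deg1 : PTree → ℕ
  | nil => 0
  | node _ nil nil => 0
  | node _ nil r => 1 + r.deg1
  | node _ l nil => 1 + l.deg1
  | node _ l r => l.deg1 + r.deg1

/-- number of nodes of outdegree 2. -/
def deg2 : PTree → ℕ
  | nil => 0
  | node _ nil nil => 0
  | node _ nil r => r.deg2
  | node _ l nil => l.deg2
  | node _ l r => 1 + l.deg2 + r.deg2

/-- length of the min-path: start from the root and at each step move to the
child with the least label. -/
def minPathLen : PTree → ℕ
  | nil => 0
  | node _ nil nil => 1
  | node _ nil r => 1 + r.minPathLen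
  | node _ l nil => 1 + l.minPathLen
  | node _ l r => 1 + (if l.rootLabel ≤ r.rootLabel then l.minPathLen else r.minPathLen)

/-- set of labels on the min-path. -/
def minPathLabels : PTree → Finset ℕ
  | nil => ∅
  | node a nil nil => {a}
  | node a nil r => insert a r.minPathLabels
  | node a l nil => insert a l.minPathLabels
  | node a l r => insert a (if l.rootLabel ≤ r.rootLabel then l.minPathLabels else r.minPathLabels)

/-- length of the max-path: start from the root and, while the current node
has outdegree two, move to the child with the larger label. -/
def maxPathLen : PTree → ℕ
  | nil => 0
  | node _ nil _ => 1
  | node _ _ nil => 1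
  | node _ l r => 1 + (if l.rootLabel ≤ r.rootLabel then r.maxPathLen else l.maxPathLen)

/-- set of labels on the max-path. -/
def maxPathLabels : PTree → Finset ℕ
  | nil => ∅
  | node a nil _ => {a}
  | node a _ nil => {a}
  | node a l r => insert a (if l.rootLabel ≤ r.rootLabel then r.maxPathLabels else l.maxPathLabels)

/-- labels on the path from the root to the leftmost leaf. -/
def leftmostPathLabels : PTree → Finset ℕ
  | nil => ∅
  | node a nil nil => {a}
  | node a nil r => insert a r.leftmostPathLabels
  | node a l _ => insert a l.leftmostPathLabels

/-- labels of nodes reachable from the root by performing only right steps. -/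
def rightSpineLabels : PTree → Finset ℕ
  | nil => ∅
  | node a _ r => insert a r.rightSpineLabels

end PTree

/-- left-to-right minima of a word. -/
def leftToRightMinima (l : List ℕ) : Set ℕ :=
  {x | ∃ i : Fin l.length, l.get i = x ∧ ∀ j : Fin l.length, (j : ℕ) < (i : ℕ) → x < l.get j}

/-- right-to-left minima of a word. -/
def rightToLeftMinima (l : List ℕ) : Set ℕ :=
  {x | ∃ i : Fin l.length, l.get i = x ∧ ∀ j : Fin l.length, (i : ℕ) < (j : ℕ) → x < l.get j}

/-- a word is up-down (alternating): l₀ < l₁ > l₂ < l₃ > ⋯ . -/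
def IsUpDown (l : List ℕ) : Prop :=
  ∀ i : ℕ, i + 1 < l.length →
    (i % 2 = 0 → l.getD i 0 < l.getD (i + 1) 0) ∧ (i % 2 = 1 → l.getD (i + 1) 0 < l.getD i 0)

/-- the n-th Euler number: the number of up-down (alternating) permutations of {1,…,n}. -/
noncomputable def eulerNumber (n : ℕ) : ℕ :=
  {l : List ℕ | l.Perm (List.range' 1 n) ∧ IsUpDown l}.ncard

/-- the Euler numbers as indexed in the paper: e₁ = e₂ = e₃ = 1, e₄ = 2, e₅ = 5, e₆ = 16, … -/
noncomputable def paperEuler (n : ℕ) : ℕ := eulerNumber (n - 1)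

/-- the number of binary increasing trees of size n (each counted once, via its
unique standard drawing). -/
noncomputable def treeCount (n : ℕ) : ℕ :=
  {t : PTree | PTree.IsBIT n t ∧ PTree.StdOriented t}.ncard

/-- number of binary increasing trees of size n whose min-path has m nodes. -/
noncomputable def minPathCount (n m : ℕ) : ℕ :=
  {t : PTree | PTree.IsBIT n t ∧ PTree.StdOriented t ∧ t.minPathLen = m}.ncard

/-- number of binary increasing trees of size n whose max-path has r nodes. -/
noncomputable def maxPathCount (n r : ℕ) : ℕ :=
  {t : PTree | PTree.IsBIT n t ∧ PTree.StdOriented t ∧ t.maxPathLen = r}.ncard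

/-- σ is a restriction of π: σ is obtained from π by keeping only the entries 1,…,k. -/
def IsRestriction (σ π : List ℕ) : Prop :=
  ∃ k, 1 ≤ k ∧ k ≤ π.length ∧ σ = π.filter (fun x => decide (x ≤ k))

/-- σ ∈ res_n(Ã): σ has size n and is a restriction of an André permutation of
the second kind associated with a strictly binary increasing tree. -/
def InRes (n : ℕ) (σ : List ℕ) : Prop :=
  σ.length = n ∧
  ∃ (m : ℕ) (t : PTree), PTree.IsBIT m t ∧ PTree.StdOriented t ∧ PTree.Strict t ∧
    IsRestriction σ (PTree.phi t)

/-- outdegree of the node labelled v in t (0 if absent). -/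
def outdeg (v : ℕ) : PTree → ℕ
  | PTree.nil => 0
  | PTree.node a l r =>
      (if a = v then (if l = PTree.nil then 0 else 1) + (if r = PTree.nil then 0 else 1) else 0)
      + outdeg v l + outdeg v r

/-- the construction Θ: attach a new node labelled `newLab` as a child of the node
labelled `v`, redrawing in the standard way. -/
def addNode (v newLab : ℕ) : PTree → PTree
  | PTree.nil => PTree.nil
  | PTree.node a l r =>
      if a = v then
        match l, r with
        | PTree.nil, PTree.nil =>
            PTree.node a PTree.nil (PTree.node newLab PTree.nil PTree.nil)
        | PTree.nil, c => PTree.node a c (PTree.node newLab PTree.nil PTree.nil)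
        | c, PTree.nil => PTree.node a c (PTree.node newLab PTree.nil PTree.nil)
        | _, _ => PTree.node a l r
      else PTree.node a (addNode v newLab l) (addNode v newLab r)

@[simp]
theorem rightToLeftMinima_nil : rightToLeftMinima [] = ∅ :=
  Set.eq_empty_of_forall_notMem fun _ ⟨i, _⟩ => i.elim0

theorem rightToLeftMinima_cons (a : ℕ) (l : List ℕ) :
    rightToLeftMinima (a :: l) = {x | x = a ∧ ∀ y ∈ l, a < y} ∪ rightToLeftMinima l := by
  ext x
  simp only [rightToLeftMinima, List.length_cons, Fin.exists_fin_succ, Fin.forall_fin_succ,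
    List.get_eq_getElem, Fin.val_zero, Fin.val_succ, List.getElem_cons_zero,
    List.getElem_cons_succ, Nat.zero_lt_succ, Nat.succ_lt_succ_iff, Nat.not_lt_zero,
    false_implies, true_implies, true_and, List.forall_mem_iff_getElem, Set.mem_union,
    Set.mem_ofPred_eq]
  simp only [Fin.forall_iff, eq_comm (a := a)]
  exact or_congr_left (and_congr_right fun hx => by rw [hx])

theorem rightToLeftMinima_subset (l : List ℕ) : rightToLeftMinima l ⊆ {x | x ∈ l} := by
  rintro _ ⟨i, rfl, -⟩
  exact l.get_mem i

theorem rightToLeftMinima_append (l₁ l₂ : List ℕ) :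
    rightToLeftMinima (l₁ ++ l₂) =
      {x ∈ rightToLeftMinima l₁ | ∀ y ∈ l₂, x < y} ∪ rightToLeftMinima l₂ := by
  induction l₁ with
  | nil => simp
  | cons a l₁ ih =>
    ext x
    simp only [List.cons_append, rightToLeftMinima_cons, ih, List.forall_mem_append,
      Set.mem_union, Set.mem_ofPred_eq]
    grind

theorem rightToLeftMinima_append_cons_of_lt {l₁ l₂ : List ℕ} {a : ℕ}
    (h₁ : ∀ x ∈ l₁, a < x) (h₂ : ∀ y ∈ l₂, a < y) :
    rightToLeftMinima (l₁ ++ a :: l₂) = insert a (rightToLeftMinima l₂) := by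
  have : {x ∈ rightToLeftMinima l₁ | ∀ y ∈ a :: l₂, x < y} = ∅ :=
    Set.eq_empty_of_forall_notMem fun x ⟨hx, hlt⟩ =>
      (h₁ x (rightToLeftMinima_subset l₁ hx)).asymm (hlt a List.mem_cons_self)
  rw [rightToLeftMinima_append, this, Set.empty_union, rightToLeftMinima_cons]
  ext x
  simp only [Set.mem_union, Set.mem_ofPred_eq, Set.mem_insert_iff]
  exact or_congr_left (and_iff_left_of_imp fun hx => hx ▸ h₂)

namespace PTree

theorem mem_phi {t : PTree} {x : ℕ} : x ∈ t.phi ↔ x ∈ t.labels := by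
  induction t with
  | nil => simp [phi, labels]
  | node a l r ihl ihr => simp [phi, labels, ihl, ihr, or_left_comm]

/- In `φ (node a l r) = φ l ++ a :: φ r` the root `a` is below every other entry, so it is a
right-to-left minimum, hides every entry of `φ l`, and leaves those of `φ r` untouched. Left
orientation makes `r ≠ nil` force two children with the larger one on the right, which is exactly
when the max-path continues into `r`. -/
theorem rightToLeftMinima_phi {t : PTree} (hinc : t.Increasing) (hlo : t.LeftOriented) :
    rightToLeftMinima t.phi = ↑t.maxPathLabels := by
  induction t with
  | nil => simp [phi, maxPathLabels]
  | node a l r _ ihr =>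
    obtain ⟨hal, har, -, hincr⟩ := hinc
    obtain ⟨honly, hlt, -, hlor⟩ := hlo
    rw [phi, rightToLeftMinima_append_cons_of_lt (fun x hx => hal x (mem_phi.1 hx))
      (fun y hy => har y (mem_phi.1 hy))]
    cases r with
    | nil => cases l <;> simp [phi, maxPathLabels]
    | node c rl rr =>
      cases l with
      | nil => exact absurd (honly rfl) nofun
      | node b ll lr =>
        have hbc : b ≤ c := (hlt nofun nofun).le
        simp [maxPathLabels, rootLabel, hbc, ihr hincr hlor]

end PTree

theorem rtlMinima_eq_maxPathLabels_general (n : ℕ) (t : PTree) (π : List ℕ)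
    (ht : PTree.IsBIT n t) (hL : PTree.LeftOriented t)
    (hphi : PTree.phi t = π) :
    rightToLeftMinima π = ↑t.maxPathLabels :=
  hphi ▸ PTree.rightToLeftMinima_phi ht.1 hL

/-- for π ∈ res(Ã) with left-oriented tree t, φ(t) = π, the set of
right-to-left minima of π is the set of labels on the max-path of t. -/
theorem rtlMinima_eq_maxPathLabels (n : ℕ) (t : PTree) (π : List ℕ)
    (hπ : InRes n π) (ht : PTree.IsBIT n t) (hL : PTree.LeftOriented t)
    (hphi : PTree.phi t = π) :
    rightToLeftMinima π = ↑t.maxPathLabels :=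
  rtlMinima_eq_maxPathLabels_general n t π ht hL hphi

end Andre
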